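/- For every colorful bin packing instance and every run of BaP on it, the number of bins used by BaP is strictly less than 4·OPT. In other words, the absolute competitive ratio of BaP is at most 4. -/

import Mathlib

/-- A packing of the instance with `n` items, sizes `s` and colors `c` (items are indexed
`1,…,n`) into bins `1,…,L`: each bin has total size at most `1`, and two items packed
consecutively into the same bin have different colors. -/
def IsPacking {γ : Type*} (n L : ℕ) (s : ℕ → ℝ) (c : ℕ → γ) (f : ℕ → ℕ) : Prop :=
  (∀ t, 1 ≤ t → t ≤ n → 1 ≤ f t ∧ f t ≤ L) ∧
  (∀ b, (∑ l ∈ (Finset.Icc 1 n).filter fun l => f l = b, s l) ≤ 1) ∧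
  (∀ i j, 1 ≤ i → i < j → j ≤ n → f i = f j →
    (∀ l, i < l → l < j → f l ≠ f i) → c i ≠ c j)

/-- `OPTcost n s c` is the minimum number of bins over all packings of the instance. -/
noncomputable def OPTcost {γ : Type*} (n : ℕ) (s : ℕ → ℝ) (c : ℕ → γ) : ℕ :=
  sInf {L | ∃ f, IsPacking n L s c f}

/-- A run of the algorithm Balanced-Pseudo (BaP) on an instance of `n` items with colors
`color 1, …, color n`.  `assign t` is the (1-based) index of the pseudo-bin receiving item `t`,
`nbins t` is the number of pseudo-bins after items `1,…,t` have been processed, and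
`bcolor t j` is the color of pseudo-bin `j` after items `1,…,t` have been processed
(the color of the last item assigned to it).  When item `t` arrives, either all existing
pseudo-bins have color `color t` and a new pseudo-bin is opened, or item `t` is assigned to an
existing pseudo-bin whose color `g` differs from `color t` and is such that the number of
pseudo-bins of color `g` is maximal among colors different from `color t` (ties arbitrary). -/
structure BaPRun (n : ℕ) {γ : Type*} [DecidableEq γ] (color : ℕ → γ) where
  assign : ℕ → ℕ
  nbins : ℕ → ℕ
  bcolor : ℕ → ℕ → γ
  nbins_zero : nbins 0 = 0
  step : ∀ t, 1 ≤ t → t ≤ n →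
    (assign t = nbins (t - 1) + 1 ∧ nbins t = nbins (t - 1) + 1 ∧
      ∀ j, 1 ≤ j → j ≤ nbins (t - 1) → bcolor (t - 1) j = color t) ∨
    (1 ≤ assign t ∧ assign t ≤ nbins (t - 1) ∧ nbins t = nbins (t - 1) ∧
      bcolor (t - 1) (assign t) ≠ color t ∧
      ∀ g, g ≠ color t →
        ((Finset.Icc 1 (nbins (t - 1))).filter fun j => bcolor (t - 1) j = g).card ≤
          ((Finset.Icc 1 (nbins (t - 1))).filter fun j =>
            bcolor (t - 1) j = bcolor (t - 1) (assign t)).card)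
  bcolor_step : ∀ t, 1 ≤ t → t ≤ n → ∀ j,
    bcolor t j = if j = assign t then color t else bcolor (t - 1) j

/-- `R.Y m` is the index of the first item assigned to pseudo-bin `m`. -/
noncomputable def BaPRun.Y {n : ℕ} {γ : Type*} [DecidableEq γ] {c : ℕ → γ}
    (R : BaPRun n c) (m : ℕ) : ℕ :=
  sInf {t | 1 ≤ t ∧ t ≤ n ∧ R.assign t = m}

/-- The number of pseudo-bins of color `g` just after items `1,…,t` have been processed. -/
def BaPRun.binsOfColor {n : ℕ} {γ : Type*} [DecidableEq γ] {c : ℕ → γ}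
    (R : BaPRun n c) (t : ℕ) (g : γ) : ℕ :=
  ((Finset.Icc 1 (R.nbins t)).filter fun j => R.bcolor t j = g).card

/-- Number of further bins opened by Next Fit on the list `l` of item sizes when the current
bin already has load `load`. -/
noncomputable def nfExtra : List ℝ → ℝ → ℕ
  | [], _ => 0
  | a :: l, load => if load + a ≤ 1 then nfExtra l (load + a) else 1 + nfExtra l a

/-- Number of bins used by Next Fit on the list `l` of item sizes. -/
noncomputable def nfBins : List ℝ → ℕ
  | [] => 0
  | a :: l => 1 + nfExtra l a

/-- The total number of (actual) bins used by the run `R` of BaP: the items of each pseudo-bin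
are split into bins, in order, by Next Fit. -/
noncomputable def bapCost {n : ℕ} {γ : Type*} [DecidableEq γ] {c : ℕ → γ}
    (s : ℕ → ℝ) (R : BaPRun n c) : ℕ :=
  ∑ j ∈ Finset.Icc 1 (R.nbins n),
    nfBins ((((Finset.Icc 1 n).filter fun t => R.assign t = j).sort (· ≤ ·)).map s)

/-! Next Fit uses at most `1 + 2·(total size)` bins on each pseudo-bin, so BaP uses at most
`q + 2·OPT` bins, where `q` is the number of pseudo-bins; it remains to show `q < 2·OPT`.
Write `q_t` for the number of pseudo-bins at time `t`. When a pseudo-bin is opened at time `T`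
for an item of color `g`, all pseudo-bins have color `g`.
Let `τ < T` be the last time at which `g` held no strict majority of the pseudo-bins. While `g`
holds a strict majority, BaP serves every item of another color from a pseudo-bin of color `g`,
so from `τ` to `T` the number of pseudo-bins of color `g` grows by at most the number of items of
color `g` minus the number of other items among `τ + 1, …, T`. In an optimal packing these items
alternate, within each bin, between color `g` and other colors, so this balance is at most `OPT`.
Hence `q_T ≤ OPT + q_τ / 2 ≤ OPT + (q_T - 1) / 2`. -/

open Finset

/-- The load of the last bin after Next Fit has processed `l`, starting with load `load`. -/
noncomputable def nfFinal : List ℝ → ℝ → ℝ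
  | [], load => load
  | a :: l, load => if load + a ≤ 1 then nfFinal l (load + a) else nfFinal l a

theorem nfFinal_nonneg : ∀ (l : List ℝ) {load : ℝ}, 0 ≤ load → (∀ x ∈ l, 0 ≤ x) →
    0 ≤ nfFinal l load
  | [], _, h, _ => h
  | a :: l, load, h, hl => by
    have ha : 0 ≤ a := hl a List.mem_cons_self
    have hl' : ∀ x ∈ l, 0 ≤ x := fun x hx => hl x (List.mem_cons_of_mem a hx)
    unfold nfFinal
    split
    · exact nfFinal_nonneg l (by linarith) hl'
    · exact nfFinal_nonneg l ha hl'

/-- Each newly opened bin together with its predecessor holds more than `1`, so the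
extra bins and the final load are paid for by twice the total size. -/
theorem nfExtra_add_nfFinal_le : ∀ (l : List ℝ) (load : ℝ), (∀ x ∈ l, 0 ≤ x) →
    (nfExtra l load : ℝ) + nfFinal l load ≤ load + 2 * l.sum
  | [], load, _ => by simp [nfExtra, nfFinal]
  | a :: l, load, hl => by
    have ha : 0 ≤ a := hl a List.mem_cons_self
    have hl' : ∀ x ∈ l, 0 ≤ x := fun x hx => hl x (List.mem_cons_of_mem a hx)
    simp only [nfExtra, nfFinal, List.sum_cons]
    split
    · linarith [nfExtra_add_nfFinal_le l (load + a) hl']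
    · push_cast
      linarith [nfExtra_add_nfFinal_le l a hl']

theorem nfBins_le (l : List ℝ) (hl : ∀ x ∈ l, 0 ≤ x) : (nfBins l : ℝ) ≤ 1 + 2 * l.sum := by
  cases l with
  | nil => simp [nfBins]
  | cons a l =>
    have ha : 0 ≤ a := hl a List.mem_cons_self
    have hl' : ∀ x ∈ l, 0 ≤ x := fun x hx => hl x (List.mem_cons_of_mem a hx)
    simp only [nfBins, List.sum_cons]
    push_cast
    linarith [nfExtra_add_nfFinal_le l a hl', nfFinal_nonneg l ha hl']

section ColorBalance

variable {γ : Type*} (c : ℕ → γ)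

def colorBalance [DecidableEq γ] (g : γ) (T : Finset ℕ) : ℤ :=
  ∑ t ∈ T, if c t = g then 1 else -1

def IsAlternating (T : Finset ℕ) : Prop :=
  ∀ i ∈ T, ∀ j ∈ T, i < j → (∀ l ∈ T, l ≤ i ∨ j ≤ l) → c i ≠ c j

variable {c}

theorem IsAlternating.mono {S T : Finset ℕ} (hT : IsAlternating c T) (hST : S ⊆ T)
    (hconv : ∀ i ∈ S, ∀ j ∈ S, ∀ l ∈ T, i < l → l < j → l ∈ S) : IsAlternating c S :=
  fun i hi j hj hij hadj => hT i (hST hi) j (hST hj) hij fun l hl =>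
    (le_or_gt l i).elim Or.inl fun hil => (le_or_gt j l).elim Or.inr fun hlj =>
      hadj l (hconv i hi j hj l hl hil hlj)

variable [DecidableEq γ] (g : γ)

theorem IsAlternating.colorBalance_le_of_isGreatest {T : Finset ℕ} (hT : IsAlternating c T)
    {m : ℕ} (hm : IsGreatest (T : Set ℕ) m) :
    colorBalance c g T ≤ if c m = g then 1 else 0 := by
  induction T using Finset.induction_on_max generalizing m with
  | empty => exact absurd hm.1 (notMem_empty m)
  | insert a s hlt ih =>
    have hma : m = a := by
      rcases mem_insert.mp hm.1 with h | h
      · exact h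
      · exact absurd (hm.2 (mem_insert_self a s)) (not_le.mpr (hlt m h))
    subst hma
    rw [colorBalance, sum_insert fun h => lt_irrefl m (hlt m h)]
    rcases s.eq_empty_or_nonempty with rfl | hs
    · split_ifs <;> simp
    have hs_alt : IsAlternating c s :=
      hT.mono (subset_insert m s) fun i hi j hj l hl _ hlj =>
        (mem_insert.mp hl).resolve_left fun h => absurd (hlt j hj) (by omega)
    have hbal := ih hs_alt (isGreatest_max' s hs)
    have hcolor : c (s.max' hs) ≠ c m :=
      hT _ (mem_insert_of_mem (max'_mem s hs)) m (mem_insert_self m s) (hlt _ (max'_mem s hs))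
        fun l hl => (mem_insert.mp hl).elim (fun h => Or.inr h.ge)
          fun h => Or.inl (le_max' s l h)
    rw [colorBalance] at hbal
    split_ifs at hbal ⊢ <;> grind

theorem IsAlternating.colorBalance_le_one {T : Finset ℕ} (hT : IsAlternating c T) :
    colorBalance c g T ≤ 1 := by
  rcases T.eq_empty_or_nonempty with rfl | hne
  · simp [colorBalance]
  · refine (hT.colorBalance_le_of_isGreatest g (isGreatest_max' T hne)).trans ?_
    split_ifs <;> norm_num

end ColorBalance

section Packing

variable {γ : Type*} {n L : ℕ} {s : ℕ → ℝ} {c : ℕ → γ} {f : ℕ → ℕ}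

theorem IsPacking.pos (hf : IsPacking n L s c f) (hn : 1 ≤ n) : 0 < L :=
  le_trans (hf.1 1 le_rfl hn).1 (hf.1 1 le_rfl hn).2

theorem IsPacking.sum_le (hf : IsPacking n L s c f) : ∑ t ∈ Icc 1 n, s t ≤ L := by
  have hmaps : ∀ t ∈ Icc 1 n, f t ∈ Icc 1 L := fun t ht =>
    mem_Icc.mpr (hf.1 t (mem_Icc.mp ht).1 (mem_Icc.mp ht).2)
  rw [← sum_fiberwise_of_maps_to hmaps]
  calc _ ≤ ∑ _b ∈ Icc 1 L, (1 : ℝ) := sum_le_sum fun b _ => hf.2.1 b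
    _ = L := by simp

/-- Within a window of consecutive items, the items of one bin alternate between color `g`
and other colors, so each bin contributes at most `1`. -/
theorem IsPacking.colorBalance_Ioc_le [DecidableEq γ] (hf : IsPacking n L s c f) (g : γ)
    (a : ℕ) {b : ℕ} (hb : b ≤ n) : colorBalance c g (Ioc a b) ≤ L := by
  have hmaps : ∀ t ∈ Ioc a b, f t ∈ Icc 1 L := fun t ht =>
    mem_Icc.mpr (hf.1 t (by grind) (by grind))
  have hbin : ∀ β, IsAlternating c ((Ioc a b).filter fun t => f t = β) := by
    intro β i hi j hj hij hadj
    simp only [mem_filter, mem_Ioc] at hi hj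
    refine hf.2.2 i j (by omega) hij (by omega) (hi.2.trans hj.2.symm) fun l hil hlj hl => ?_
    have := hadj l (by simp only [mem_filter, mem_Ioc]; exact ⟨⟨by omega, by omega⟩, hl.trans hi.2⟩)
    omega
  rw [colorBalance, ← sum_fiberwise_of_maps_to hmaps]
  calc _ ≤ ∑ _β ∈ Icc 1 L, (1 : ℤ) := sum_le_sum fun β _ => (hbin β).colorBalance_le_one g
    _ = L := by simp

theorem isPacking_id (hs : ∀ t, 1 ≤ t → t ≤ n → s t ≤ 1) : IsPacking n n s c id := by
  refine ⟨fun t h1 h2 => ⟨h1, h2⟩, fun b => ?_, fun i j _ hij _ hfij _ => absurd hfij hij.ne⟩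
  change ∑ l ∈ (Icc 1 n).filter (· = b), s l ≤ 1
  by_cases hb : b ∈ Icc 1 n
  · rw [filter_eq' (Icc 1 n) b, if_pos hb, sum_singleton]
    exact hs b (mem_Icc.mp hb).1 (mem_Icc.mp hb).2
  · rw [filter_eq' (Icc 1 n) b, if_neg hb, sum_empty]
    exact zero_le_one

theorem exists_isPacking_OPTcost (hs : ∀ t, 1 ≤ t → t ≤ n → s t ≤ 1) :
    ∃ f, IsPacking n (OPTcost n s c) s c f :=
  Nat.sInf_mem (s := {L | ∃ f, IsPacking n L s c f}) ⟨n, id, isPacking_id hs⟩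

end Packing

theorem le_add_sum_Ioc_of_forall_le_add {f h : ℕ → ℤ} {a b : ℕ} (hab : a ≤ b)
    (hf : ∀ u ∈ Ioc a b, f u ≤ f (u - 1) + h u) : f b ≤ f a + ∑ u ∈ Ioc a b, h u := by
  induction b, hab using Nat.le_induction with
  | base => simp
  | succ b hab ih =>
    rw [sum_Ioc_succ_top hab]
    have hb := hf (b + 1) (mem_Ioc.mpr ⟨by omega, le_rfl⟩)
    have := ih fun u hu => hf u (Ioc_subset_Ioc_right b.le_succ hu)
    rw [Nat.add_sub_cancel] at hb
    linarith

namespace BaPRun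

variable {γ : Type*} [DecidableEq γ] {n : ℕ} {c : ℕ → γ} (R : BaPRun n c)

theorem nbins_eq_or_eq_succ {t : ℕ} (h1 : 1 ≤ t) (h2 : t ≤ n) :
    R.nbins t = R.nbins (t - 1) ∨ R.nbins t = R.nbins (t - 1) + 1 := by
  rcases R.step t h1 h2 with h | h
  · exact Or.inr h.2.1
  · exact Or.inl h.2.2.1

theorem nbins_mono {t t' : ℕ} (htt' : t ≤ t') (ht' : t' ≤ n) : R.nbins t ≤ R.nbins t' := by
  induction t', htt' using Nat.le_induction with
  | base => rfl
  | succ k _ ih =>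
    have := R.nbins_eq_or_eq_succ (t := k + 1) (by omega) ht'
    rw [Nat.add_sub_cancel] at this
    have := ih (by omega)
    omega

theorem assign_mem_Icc {t : ℕ} (h1 : 1 ≤ t) (h2 : t ≤ n) :
    R.assign t ∈ Icc 1 (R.nbins n) := by
  have hmono := R.nbins_mono h2 le_rfl
  rcases R.step t h1 h2 with h | h
  · have := R.nbins_mono (t := t - 1) (by omega) h2
    exact mem_Icc.mpr ⟨by omega, by omega⟩
  · have := R.nbins_mono (t := t - 1) (by omega) h2
    exact mem_Icc.mpr ⟨h.1, by omega⟩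

theorem bapCost_le {s : ℕ → ℝ} (hs : ∀ t, 1 ≤ t → t ≤ n → 0 ≤ s t) :
    (bapCost s R : ℝ) ≤ R.nbins n + 2 * ∑ t ∈ Icc 1 n, s t := by
  set bin : ℕ → Finset ℕ := fun j => (Icc 1 n).filter fun t => R.assign t = j
  have hsum : ∀ j, (((bin j).sort (· ≤ ·)).map s).sum = ∑ t ∈ bin j, s t := fun j => by
    rw [← sum_map_toList]
    exact ((sort_perm_toList _ _).map s).sum_eq
  have hnonneg : ∀ j, ∀ x ∈ ((bin j).sort (· ≤ ·)).map s, 0 ≤ x := by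
    intro j x hx
    obtain ⟨t, ht, rfl⟩ := List.mem_map.mp hx
    have ht := mem_Icc.mp (mem_filter.mp (mem_sort _ |>.mp ht)).1
    exact hs t ht.1 ht.2
  have hmaps : ∀ t ∈ Icc 1 n, R.assign t ∈ Icc 1 (R.nbins n) := fun t ht =>
    R.assign_mem_Icc (mem_Icc.mp ht).1 (mem_Icc.mp ht).2
  calc (bapCost s R : ℝ)
      ≤ ∑ j ∈ Icc 1 (R.nbins n), (1 + 2 * ∑ t ∈ bin j, s t) := by
        unfold bapCost
        push_cast
        exact sum_le_sum fun j _ => hsum j ▸ nfBins_le _ (hnonneg j)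
    _ = R.nbins n + 2 * ∑ t ∈ Icc 1 n, s t := by
        rw [sum_add_distrib, ← mul_sum, sum_fiberwise_of_maps_to hmaps]
        simp

theorem binsOfColor_zero (g : γ) : R.binsOfColor 0 g = 0 := by
  simp [binsOfColor, R.nbins_zero]

theorem binsOfColor_add_binsOfColor_le (t : ℕ) {g g' : γ} (hgg' : g ≠ g') :
    R.binsOfColor t g + R.binsOfColor t g' ≤ R.nbins t := by
  unfold binsOfColor
  rw [← card_union_of_disjoint (disjoint_filter.mpr fun _ _ h h' => hgg' (h.symm.trans h'))]
  calc _ ≤ #(Icc 1 (R.nbins t)) :=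
        card_le_card (union_subset (filter_subset _ _) (filter_subset _ _))
    _ = R.nbins t := by simp

theorem binsOfColor_of_forall_bcolor_eq {t : ℕ} {x : γ}
    (h : ∀ j, 1 ≤ j → j ≤ R.nbins t → R.bcolor t j = x) (g : γ) :
    R.binsOfColor t g = if x = g then R.nbins t else 0 := by
  have hx : ∀ j ∈ Icc 1 (R.nbins t), R.bcolor t j = x := fun j hj =>
    h j (mem_Icc.mp hj).1 (mem_Icc.mp hj).2
  unfold binsOfColor
  split_ifs with hxg
  · rw [filter_true_of_mem fun j hj => (hx j hj).trans hxg]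
    simp
  · rw [filter_false_of_mem fun j hj => (hx j hj).trans_ne hxg, card_empty]

theorem bcolor_of_opens {t : ℕ} (h1 : 1 ≤ t) (h2 : t ≤ n)
    (hop : R.nbins t = R.nbins (t - 1) + 1) :
    ∀ j, 1 ≤ j → j ≤ R.nbins t → R.bcolor t j = c t := by
  obtain ⟨hassign, -, hall⟩ := (R.step t h1 h2).resolve_right fun h => by omega
  intro j hj1 hj2
  rw [R.bcolor_step t h1 h2 j]
  split_ifs with hj
  · rfl
  · exact hall j hj1 (by omega)

/-- When item `t` joins the pseudo-bin `R.assign t`, that bin changes its color from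
`R.bcolor (t - 1) (R.assign t)` to `c t`, and no other bin changes. -/
theorem binsOfColor_of_not_opens {t : ℕ} (h1 : 1 ≤ t) (h2 : t ≤ n)
    (hna : R.nbins t = R.nbins (t - 1)) (g : γ) :
    (R.binsOfColor t g : ℤ) = R.binsOfColor (t - 1) g + (if c t = g then 1 else 0)
      - (if R.bcolor (t - 1) (R.assign t) = g then 1 else 0) := by
  obtain ⟨ha1, ha2, -⟩ := (R.step t h1 h2).resolve_left fun h => by omega
  have ha : R.assign t ∈ Icc 1 (R.nbins (t - 1)) := mem_Icc.mpr ⟨ha1, ha2⟩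
  have hstep := R.bcolor_step t h1 h2
  unfold binsOfColor
  rw [hna, natCast_card_filter, natCast_card_filter, ← add_sum_erase _ _ ha,
    ← add_sum_erase _ _ ha, sum_congr rfl fun j hj => by rw [hstep j, if_neg (ne_of_mem_erase hj)],
    hstep, if_pos rfl]
  ring

/-- While color `g` holds a strict majority of the pseudo-bins, it is the color BaP serves
items of other colors from, so every item changes the count of `g` by its sign. -/
theorem binsOfColor_le_of_majority {u : ℕ} (h1 : 1 ≤ u) (h2 : u ≤ n) {g : γ}
    (hmaj : R.nbins u < 2 * R.binsOfColor u g) :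
    (R.binsOfColor u g : ℤ) ≤ R.binsOfColor (u - 1) g + if c u = g then 1 else -1 := by
  rcases R.step u h1 h2 with ⟨-, hop, hall⟩ | ⟨-, -, hna, hg₀, hmax⟩
  · rw [R.binsOfColor_of_forall_bcolor_eq (R.bcolor_of_opens h1 h2 hop) g] at hmaj ⊢
    rw [R.binsOfColor_of_forall_bcolor_eq hall g]
    split_ifs at hmaj ⊢ <;> omega
  · have hchange := R.binsOfColor_of_not_opens h1 h2 hna g
    rw [hchange]
    by_cases hcu : c u = g
    · subst hcu
      simp [hg₀]
    by_cases hg₀g : R.bcolor (u - 1) (R.assign u) = g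
    · simp [hcu, hg₀g]
    exfalso
    have hle : R.binsOfColor (u - 1) g ≤ R.binsOfColor (u - 1) (R.bcolor (u - 1) (R.assign u)) :=
      hmax g fun h => hcu h.symm
    have hsum := R.binsOfColor_add_binsOfColor_le (u - 1) (Ne.symm hg₀g)
    simp only [hcu, hg₀g, if_false] at hchange
    omega

theorem nbins_lt_two_mul_of_opens {L : ℕ} {s : ℕ → ℝ} {f : ℕ → ℕ} (hf : IsPacking n L s c f)
    {T : ℕ} (h1 : 1 ≤ T) (h2 : T ≤ n) (hop : R.nbins T = R.nbins (T - 1) + 1) :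
    R.nbins T < 2 * L := by
  set g := c T
  set P : ℕ → Prop := fun v => 2 * R.binsOfColor v g ≤ R.nbins v
  set τ := Nat.findGreatest P (T - 1)
  have hτT : τ ≤ T - 1 := Nat.findGreatest_le _
  have hτ : P τ := Nat.findGreatest_spec (P := P) (Nat.zero_le _) <| by
    simp only [P, R.binsOfColor_zero, R.nbins_zero]; rfl
  have hT : R.binsOfColor T g = R.nbins T := by
    simp [R.binsOfColor_of_forall_bcolor_eq (R.bcolor_of_opens h1 h2 hop), g]
  have hmaj : ∀ u ∈ Ioc τ T, R.nbins u < 2 * R.binsOfColor u g := by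
    intro u hu
    rcases (mem_Ioc.mp hu).2.lt_or_eq with huT | rfl
    · exact not_le.mp (Nat.findGreatest_is_greatest (P := P) (mem_Ioc.mp hu).1 (by omega))
    · omega
  have hgrowth := le_add_sum_Ioc_of_forall_le_add (h := fun u => if c u = g then 1 else -1)
    (by omega : τ ≤ T) fun u hu =>
      R.binsOfColor_le_of_majority (by grind) (by grind) (hmaj u hu)
  have hbalance := hf.colorBalance_Ioc_le g τ h2
  have hτ_le := R.nbins_mono hτT (by omega)
  rw [colorBalance] at hbalance
  omega

theorem nbins_lt_two_mul {L : ℕ} {s : ℕ → ℝ} {f : ℕ → ℕ} (hf : IsPacking n L s c f)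
    (hL : 0 < L) {t : ℕ} (ht : t ≤ n) : R.nbins t < 2 * L := by
  induction t with
  | zero => rw [R.nbins_zero]; omega
  | succ t ih =>
    rcases R.nbins_eq_or_eq_succ (t := t + 1) (by omega) ht with h | h
    · rw [h]; exact ih (by omega)
    · exact R.nbins_lt_two_mul_of_opens hf (by omega) ht h

end BaPRun

/-- on every (nonempty) colorful bin packing instance, every run of BaP uses
strictly fewer than `4·OPT` bins: the absolute competitive ratio of BaP is at most `4`. -/
theorem bap_lt_four_OPT {γ : Type*} [DecidableEq γ] (n : ℕ) (hn : 1 ≤ n)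
    (s : ℕ → ℝ) (c : ℕ → γ) (hs : ∀ t, 1 ≤ t → t ≤ n → s t ∈ Set.Icc (0 : ℝ) 1)
    (R : BaPRun n c) :
    bapCost s R < 4 * OPTcost n s c := by
  obtain ⟨f, hf⟩ := exists_isPacking_OPTcost (c := c) fun t h1 h2 => (hs t h1 h2).2
  have hbins : R.nbins n + 1 ≤ 2 * OPTcost n s c := R.nbins_lt_two_mul hf (hf.pos hn) le_rfl
  have hcost := R.bapCost_le fun t h1 h2 => (hs t h1 h2).1
  have hsize := hf.sum_le
  have hbins' : (R.nbins n : ℝ) + 1 ≤ 2 * OPTcost n s c := by exact_mod_cast hbins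
  exact_mod_cast (by linarith : (bapCost s R : ℝ) < 4 * OPTcost n s c)
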